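/- arXiv:2306.10956 — 4 statements merged into one kernel-verified Lean document; each statement's English description precedes it below -/
import Mathlib

section
/- For 0 < L < M, α ≥ 1, and j* = 2LM/(L+M): for every x with L < x < M and x ≠ j*, it holds that |x - j*|^α / x^α < ((M-L)/(M+L))^α. That is, the pure strategies x = L and x = M are the unique maximizers of x ↦ u(x, j*) on [L,M]. -/
theorem stmt_4 (L M α : ℝ) (hL : 0 < L) (hLM : L < M) (hα : 1 ≤ α) :
    ∀ x : ℝ, L < x → x < M → x ≠ 2 * L * M / (L + M) →
      |x - 2 * L * M / (L + M)| ^ α / x ^ α < ((M - L) / (M + L)) ^ α := by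
  intro x hx1 hx2 _
  have hx0 : 0 < x := hL.trans hx1
  have hLM0 : (0:ℝ) < L + M := by linarith
  have hj : 2 * L * M / (L + M) * (L + M) = 2 * L * M :=
    div_mul_cancel₀ _ (ne_of_gt hLM0)
  have key : |x - 2 * L * M / (L + M)| / x < (M - L) / (M + L) := by
    rw [div_lt_div_iff₀ hx0 (by linarith : (0:ℝ) < M + L)]
    rcases abs_cases (x - 2 * L * M / (L + M)) with ⟨h, _⟩ | ⟨h, _⟩ <;> rw [h] <;> nlinarith
  calc |x - 2 * L * M / (L + M)| ^ α / x ^ α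
      = (|x - 2 * L * M / (L + M)| / x) ^ α :=
        (Real.div_rpow (abs_nonneg _) hx0.le α).symm
    _ < ((M - L) / (M + L)) ^ α :=
        Real.rpow_lt_rpow (by positivity) key (by linarith)
end

section
/- For 0 < L < M and α ≥ 1, the receiver has no pure-strategy best-response pair forming a Nash equilibrium: for every x ∈ [L,M], the jammer's unique best response is y = x (giving value 0), and against y = x the receiver can deviate to some x' ∈ [L,M] with u(x', x) > 0. Hence no pure strategy profile (x,y) is a Nash equilibrium. -/
theorem stmt_10 (L M α : ℝ) (hL : 0 < L) (hLM : L < M) (hα : 1 ≤ α) :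
    (∀ x ∈ Set.Icc L M, |x - x| ^ α / x ^ α = 0 ∧
      ∀ y ∈ Set.Icc L M, y ≠ x → 0 < |x - y| ^ α / x ^ α) ∧
    (∀ x ∈ Set.Icc L M, ∃ x' ∈ Set.Icc L M, 0 < |x' - x| ^ α / x' ^ α) ∧
    ¬ ∃ x ∈ Set.Icc L M, ∃ y ∈ Set.Icc L M,
        (∀ x' ∈ Set.Icc L M, |x' - y| ^ α / x' ^ α ≤ |x - y| ^ α / x ^ α) ∧
        (∀ y' ∈ Set.Icc L M, |x - y| ^ α / x ^ α ≤ |x - y'| ^ α / x ^ α) := by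
  have hα0 : α ≠ 0 := by positivity
  have hxpos : ∀ x ∈ Set.Icc L M, (0:ℝ) < x := fun x hx => lt_of_lt_of_le hL hx.1
  have hzero : ∀ x ∈ Set.Icc L M, |x - x| ^ α / x ^ α = 0 := by
    intro x hx
    rw [sub_self, abs_zero, Real.zero_rpow hα0, zero_div]
  have hpos : ∀ x ∈ Set.Icc L M, ∀ y : ℝ, y ≠ x → 0 < |x - y| ^ α / x ^ α := by
    intro x hx y hyx
    have hx0 := hxpos x hx
    have h1 : (0:ℝ) < |x - y| := abs_pos.mpr (sub_ne_zero.mpr (Ne.symm hyx))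
    exact div_pos (Real.rpow_pos_of_pos h1 α) (Real.rpow_pos_of_pos hx0 α)
  have hdev : ∀ x ∈ Set.Icc L M, ∃ x' ∈ Set.Icc L M, 0 < |x' - x| ^ α / x' ^ α := by
    intro x hx
    by_cases h : x = L
    · refine ⟨M, ⟨hLM.le, le_refl M⟩, hpos M ⟨hLM.le, le_refl M⟩ x ?_⟩
      rw [h]; exact hLM.ne
    · exact ⟨L, ⟨le_refl L, hLM.le⟩, hpos L ⟨le_refl L, hLM.le⟩ x h⟩
  refine ⟨fun x hx => ⟨hzero x hx, fun y hy hyx => hpos x hx y hyx⟩, hdev, ?_⟩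
  rintro ⟨x, hx, y, hy, hrec, hjam⟩
  have h1 : |x - y| ^ α / x ^ α ≤ 0 := by
    have := hjam x hx
    rwa [hzero x hx] at this
  have hxy : y = x := by
    by_contra hne
    exact absurd h1 (not_le.mpr (hpos x hx y hne))
  rw [hxy] at hrec
  obtain ⟨x', hx', hx'pos⟩ := hdev x hx
  have := hrec x' hx'
  rw [hzero x hx] at this
  exact absurd this (not_le.mpr hx'pos)
end

section
/- For 0 < L < M and α = 1, the mixed-strategy maximin value of the receiver restricted to mixtures over {L, M} equals (M-L)/(M+L): precisely, max over p ∈ [0,1] of (min over y ∈ [L,M] of p·(y-L)/L + (1-p)·(M-y)/M) = (M-L)/(M+L), attained at p = L/(L+M). -/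
theorem stmt_12 (L M : ℝ) (hL : 0 < L) (hLM : L < M) :
    IsGreatest {m : ℝ | ∃ p ∈ Set.Icc (0:ℝ) 1,
        IsLeast ((fun y => p * ((y - L) / L) + (1 - p) * ((M - y) / M)) '' Set.Icc L M) m}
      ((M - L) / (M + L)) ∧
    IsLeast ((fun y => (L / (L + M)) * ((y - L) / L)
        + (1 - L / (L + M)) * ((M - y) / M)) '' Set.Icc L M) ((M - L) / (M + L)) := by
  have hM : 0 < M := hL.trans hLM
  have hS : 0 < L + M := by linarith
  have hconst : ∀ y : ℝ, (L / (L + M)) * ((y - L) / L)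
      + (1 - L / (L + M)) * ((M - y) / M) = (M - L) / (M + L) := by
    intro y
    field_simp
    ring
  have hleast : IsLeast ((fun y => (L / (L + M)) * ((y - L) / L)
      + (1 - L / (L + M)) * ((M - y) / M)) '' Set.Icc L M) ((M - L) / (M + L)) := by
    constructor
    · exact ⟨L, ⟨le_refl L, hLM.le⟩, hconst L⟩
    · rintro x ⟨y, hy, rfl⟩
      simp only [hconst y]
      exact le_refl _
  refine ⟨⟨⟨L / (L + M), ⟨by positivity, by rw [div_le_one hS]; linarith⟩, hleast⟩, ?_⟩, hleast⟩
  rintro m ⟨p, ⟨hp0, hp1⟩, hmem, hlb⟩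
  have h1 : m ≤ p * ((L - L) / L) + (1 - p) * ((M - L) / M) :=
    hlb ⟨L, ⟨le_refl L, hLM.le⟩, rfl⟩
  have h2 : m ≤ p * ((M - L) / L) + (1 - p) * ((M - M) / M) :=
    hlb ⟨M, ⟨hLM.le, le_refl M⟩, rfl⟩
  rw [le_div_iff₀ (by linarith : (0:ℝ) < M + L)]
  have h1' : m * M ≤ (1 - p) * (M - L) := by
    have := h1
    simp only [sub_self, zero_div, mul_zero, zero_add] at this
    rw [mul_comm (1-p), div_mul_eq_mul_div, le_div_iff₀ hM] at this
    linarith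
  have h2' : m * L ≤ p * (M - L) := by
    have := h2
    simp only [sub_self, zero_div, mul_zero, add_zero] at this
    rw [mul_comm p, div_mul_eq_mul_div, le_div_iff₀ hL] at this
    linarith
  rcases le_or_gt (L / (L + M)) p with hp | hp
  · have hp' : L ≤ p * (L + M) := by rw [div_le_iff₀ hS] at hp; linarith
    nlinarith [mul_pos hL hM]
  · have hp' : p * (L + M) ≤ L := by rw [lt_div_iff₀ hS] at hp; nlinarith
    nlinarith [mul_pos hL hM]
end

section
/- For 0 < L < M and α = 1, consider the zero-sum game with receiver strategy x ∈ [L,M], jammer strategy y ∈ [L,M] and receiver payoff u(x,y) = |x-y|^α/x^α. Let the jammer play the pure strategy j* = 2LM/(L+M), and let the receiver play L with probability p = L/(L+M) and M with probability 1-p. Then the expected payoff p·u(L,j*) + (1-p)·u(M,j*) equals (M-L)/(M+L), and no pure deviation of either player strictly improves their own payoff: receiver deviations to any x ∈ [L,M] give utility ≤ (M-L)/(M+L), and jammer deviations to any y ∈ [L,M] give expected utility ≥ (M-L)/(M+L). -/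
theorem stmt_18 (L M : ℝ) (hL : 0 < L) (hLM : L < M) :
    (L / (L + M)) * (|L - 2 * L * M / (L + M)| / L)
        + (1 - L / (L + M)) * (|M - 2 * L * M / (L + M)| / M) = (M - L) / (M + L) ∧
    (∀ x ∈ Set.Icc L M, |x - 2 * L * M / (L + M)| / x ≤ (M - L) / (M + L)) ∧
    (∀ y ∈ Set.Icc L M, (M - L) / (M + L)
        ≤ (L / (L + M)) * (|L - y| / L) + (1 - L / (L + M)) * (|M - y| / M)) := by
  have hS : (0:ℝ) < L + M := by linarith
  have hM : (0:ℝ) < M := lt_trans hL hLM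
  have hLj : L - 2 * L * M / (L + M) ≤ 0 := by
    rw [sub_nonpos, le_div_iff₀ hS]; nlinarith
  have hMj : 0 ≤ M - 2 * L * M / (L + M) := by
    rw [sub_nonneg, div_le_iff₀ hS]; nlinarith
  refine ⟨?_, ?_, ?_⟩
  · rw [abs_of_nonpos hLj, abs_of_nonneg hMj]
    field_simp
    ring
  · intro x hx
    obtain ⟨hx1, hx2⟩ := hx
    have hx0 : 0 < x := lt_of_lt_of_le hL hx1
    rw [div_le_div_iff₀ hx0 (by linarith : (0:ℝ) < M + L)]
    rcases abs_cases (x - 2 * L * M / (L + M)) with ⟨he, _⟩ | ⟨he, _⟩ <;> rw [he]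
    · have : 2 * L * M / (L + M) * (L + M) = 2 * L * M := by field_simp
      nlinarith [div_nonneg (by nlinarith : (0:ℝ) ≤ 2*L*M) hS.le]
    · have : 2 * L * M / (L + M) * (L + M) = 2 * L * M := by field_simp
      nlinarith
  · intro y hy
    obtain ⟨hy1, hy2⟩ := hy
    rw [abs_of_nonpos (by linarith : L - y ≤ 0), abs_of_nonneg (by linarith : 0 ≤ M - y)]
    have h : (L / (L + M)) * (-(L - y) / L) + (1 - L / (L + M)) * ((M - y) / M)
        = (M - L) / (M + L) := by field_simp; ring
    rw [h]
end
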